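/- (Misère Nim) Let a₁, ..., a_k be natural numbers and let G = *a₁ + ... + *a_k be the disjunctive sum of the corresponding Nim-heaps. If some a_i ≥ 2, then G is a misère P-position if and only if a₁ ⊕ a₂ ⊕ ... ⊕ a_k = 0. If instead every a_i is 0 or 1, then G is a misère P-position if and only if a₁ ⊕ a₂ ⊕ ... ⊕ a_k = 1. -/

import Mathlib

/-! A move in `*a₁ + ⋯ + *a_k` lowers one heap, so by induction on the total heap size it
suffices to check that "`xorSum L = 1` if every heap is at most `1`, else `xorSum L = 0`"
satisfies the recursion defining misère P-positions. Every move changes the nim-sum, and a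
position with exactly one heap `≥ 2` has nim-sum `≥ 2`, so no move joins two such positions.
Conversely, from any other position with a move one can reach one: reduce the only heap `≥ 2`
(or a heap `1`, if there is none) to leave an odd number of heaps `1`, or, with two heaps `≥ 2`,
make the normal Nim move, which leaves one of them in place. -/

universe u

namespace SetTheory

/-- Combinatorial pre-games (removed from Mathlib; reinstated with the old definition). -/
inductive PGame : Type (u + 1)
  | mk : ∀ α β : Type u, (α → PGame) → (β → PGame) → PGame

namespace PGame

instance : Zero PGame.{u} :=
  ⟨⟨PEmpty, PEmpty, PEmpty.elim, PEmpty.elim⟩⟩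

noncomputable instance : Add PGame.{u} :=
  ⟨fun x y => by
    induction x generalizing y with | mk xl xr _ _ IHxl IHxr => _
    induction y with | mk yl yr yL yR IHyl IHyr => _
    have y := mk yl yr yL yR
    refine ⟨xl ⊕ yl, xr ⊕ yr, Sum.rec ?_ ?_, Sum.rec ?_ ?_⟩
    · exact fun i => IHxl i y
    · exact IHyl
    · exact fun i => IHxr i y
    · exact IHyr⟩

noncomputable def nim (o : Ordinal.{u}) : PGame.{u} :=
  ⟨o.ToType, o.ToType,
    fun x => nim (Ordinal.typein (α := o.ToType) (· < ·) x),
    fun x => nim (Ordinal.typein (α := o.ToType) (· < ·) x)⟩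
termination_by o
decreasing_by all_goals exact Ordinal.typein_lt_self x

end PGame

end SetTheory

open SetTheory PGame

/-- `G` is a misère P-position: `G` has at least one option and every option of `G` is a
misère N-position (i.e. not a misère P-position).  In particular the empty game `0` is a
misère N-position.  (For an impartial game the options are the left moves.) -/
def MisereP : PGame → Prop
  | PGame.mk l _ L _ => Nonempty l ∧ ∀ i, ¬ MisereP (L i)

/-- The disjunctive sum of Nim-heaps `*a₁ + ⋯ + *a_k` for a list `[a₁, …, a_k]`. -/
noncomputable def nimHeapSum : List ℕ → PGame.{0}
  | [] => 0
  | a :: L => nim (a : Ordinal) + nimHeapSum L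

namespace SetTheory.PGame

def leftOptions : PGame.{u} → Set PGame.{u}
  | mk _ _ L _ => Set.range L

theorem misereP_iff (G : PGame) :
    MisereP G ↔ (leftOptions G).Nonempty ∧ ∀ H ∈ leftOptions G, ¬ MisereP H := by
  cases G
  simp only [MisereP, leftOptions, Set.range_nonempty_iff_nonempty, Set.forall_mem_range]

theorem leftOptions_add (x y : PGame.{u}) :
    leftOptions (x + y) = (· + y) '' leftOptions x ∪ (x + ·) '' leftOptions y := by
  cases x with | mk xl xr xL xR =>
  cases y with | mk yl yr yL yR =>
  change Set.range (Sum.elim (fun i => xL i + mk yl yr yL yR) fun j => mk xl xr xL xR + yL j) = _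
  rw [Set.Sum.elim_range, leftOptions, leftOptions, ← Set.range_comp, ← Set.range_comp]
  rfl

theorem leftOptions_nim (o : Ordinal.{u}) : leftOptions (nim o) = nim '' Set.Iio o := by
  rw [nim, leftOptions, Set.range_comp' nim]
  congr 1
  ext b
  exact (Ordinal.mem_range_typein_iff _).trans (by rw [Ordinal.type_toType]; rfl)

theorem leftOptions_nim_natCast (n : ℕ) :
    leftOptions (nim n) = (fun b : ℕ => nim b) '' Set.Iio n := by
  rw [leftOptions_nim, ← Ordinal.natCast_image_Iio, Set.image_image]

end SetTheory.PGame

def NimMove (L' L : List ℕ) : Prop :=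
  ∃ l₁ l₂ a b, b < a ∧ L = l₁ ++ a :: l₂ ∧ L' = l₁ ++ b :: l₂

theorem NimMove.sum_lt {L' L : List ℕ} (h : NimMove L' L) : L'.sum < L.sum := by
  obtain ⟨l₁, l₂, a, b, hb, rfl, rfl⟩ := h
  simp only [List.sum_append, List.sum_cons]
  omega

theorem NimMove.exists_pos {L' L : List ℕ} (h : NimMove L' L) : ∃ c ∈ L, 0 < c := by
  obtain ⟨l₁, l₂, a, b, hb, rfl, -⟩ := h
  exact ⟨a, by simp, by omega⟩

theorem NimMove.exists_perm {L' L : List ℕ} (h : NimMove L' L) :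
    ∃ c b R, b < c ∧ L.Perm (c :: R) ∧ L'.Perm (b :: R) := by
  obtain ⟨l₁, l₂, a, b, hb, rfl, rfl⟩ := h
  exact ⟨a, b, l₁ ++ l₂, hb, List.perm_middle, List.perm_middle⟩

theorem exists_nimMove_of_mem {L : List ℕ} {c b : ℕ} (hc : c ∈ L) (hb : b < c) :
    ∃ L', NimMove L' L ∧ L'.Perm (b :: L.erase c) := by
  obtain ⟨l₁, l₂, rfl⟩ := List.append_of_mem hc
  refine ⟨l₁ ++ b :: l₂, ⟨l₁, l₂, c, b, hb, rfl, rfl⟩, List.perm_middle.trans (.cons b ?_)⟩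
  exact ((List.perm_middle).symm.trans (List.perm_cons_erase hc)).cons_inv

theorem setOf_nimMove_nil : {L' | NimMove L' []} = ∅ := by
  ext L'
  simp [NimMove]

theorem setOf_nimMove_cons (a : ℕ) (L : List ℕ) :
    {L' | NimMove L' (a :: L)} = (· :: L) '' Set.Iio a ∪ (a :: ·) '' {L' | NimMove L' L} := by
  ext L'
  constructor
  · rintro ⟨_ | ⟨x, l₁⟩, l₂, c, b, hb, hL, rfl⟩ <;> simp only [List.nil_append, List.cons_append,
      List.cons.injEq] at hL <;> obtain ⟨rfl, rfl⟩ := hL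
    · exact Or.inl ⟨b, hb, rfl⟩
    · exact Or.inr ⟨l₁ ++ b :: l₂, ⟨l₁, l₂, c, b, hb, rfl, rfl⟩, rfl⟩
  · rintro (⟨b, hb, rfl⟩ | ⟨_, ⟨l₁, l₂, c, b, hb, rfl, rfl⟩, rfl⟩)
    · exact ⟨[], L, a, b, hb, rfl, rfl⟩
    · exact ⟨a :: l₁, l₂, c, b, hb, rfl, rfl⟩

theorem leftOptions_nimHeapSum (L : List ℕ) :
    leftOptions (nimHeapSum L) = nimHeapSum '' {L' | NimMove L' L} := by
  induction L with
  | nil =>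
    rw [setOf_nimMove_nil, Set.image_empty]
    exact Set.range_eq_empty _
  | cons a L ih =>
    rw [setOf_nimMove_cons, Set.image_union, Set.image_image, Set.image_image, nimHeapSum,
      leftOptions_add, leftOptions_nim_natCast, ih, Set.image_image, Set.image_image]
    rfl

def xorSum (L : List ℕ) : ℕ := L.foldr (fun a r => a ^^^ r) 0

@[simp] theorem xorSum_cons (a : ℕ) (L : List ℕ) : xorSum (a :: L) = a ^^^ xorSum L := rfl

theorem List.Perm.xorSum_eq {L₁ L₂ : List ℕ} (h : L₁.Perm L₂) : xorSum L₁ = xorSum L₂ :=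
  h.foldr_op_eq

theorem xorSum_eq_xor_xorSum_erase {L : List ℕ} {c : ℕ} (hc : c ∈ L) :
    xorSum L = c ^^^ xorSum (L.erase c) :=
  (List.perm_cons_erase hc).xorSum_eq

theorem xorSum_lt_two_pow {L : List ℕ} {n : ℕ} (h : ∀ a ∈ L, a < 2 ^ n) : xorSum L < 2 ^ n := by
  induction L with
  | nil => exact Nat.two_pow_pos n
  | cons a L ih =>
    rw [List.forall_mem_cons] at h
    exact Nat.xor_lt_two_pow h.1 (ih h.2)

theorem xorSum_le_one {L : List ℕ} (h : ∀ a ∈ L, a ≤ 1) : xorSum L ≤ 1 :=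
  Nat.lt_succ_iff.1 (xorSum_lt_two_pow (n := 1) fun a ha => Nat.lt_succ_iff.2 (h a ha))

theorem exists_mem_xor_lt_of_lt_xorSum {L : List ℕ} {c : ℕ} (h : c < xorSum L) :
    ∃ d ∈ L, d ^^^ xorSum L ^^^ c < d := by
  induction L generalizing c with
  | nil => exact absurd h (Nat.not_lt_zero c)
  | cons a L ih =>
    rw [xorSum_cons] at h ⊢
    rcases Nat.lt_xor_cases h with h | h
    · refine ⟨a, List.mem_cons_self, ?_⟩
      rwa [Nat.xor_xor_cancel_left, Nat.xor_comm]
    · obtain ⟨d, hd, hlt⟩ := ih h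
      refine ⟨d, List.mem_cons_of_mem a hd, ?_⟩
      convert hlt using 1
      ac_rfl

theorem xor_one_le_one {x : ℕ} (hx : x ≤ 1) : x ^^^ 1 ≤ 1 :=
  Nat.lt_succ_iff.1 (Nat.xor_lt_two_pow (n := 1) (Nat.lt_succ_iff.2 hx) one_lt_two)

theorem two_le_xor {a b : ℕ} (ha : 2 ≤ a) (hb : b ≤ 1) : 2 ≤ a ^^^ b := by
  by_contra h
  have : a ^^^ b ^^^ b < 2 ^ 1 := Nat.xor_lt_two_pow (by omega) (by omega)
  rw [Nat.xor_assoc, Nat.xor_self, Nat.xor_zero] at this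
  omega

def IsMisereNimP (L : List ℕ) : Prop :=
  xorSum L = if ∀ a ∈ L, a ≤ 1 then 1 else 0

theorem List.Perm.isMisereNimP_iff {L₁ L₂ : List ℕ} (h : L₁.Perm L₂) :
    IsMisereNimP L₁ ↔ IsMisereNimP L₂ := by
  simp only [IsMisereNimP, h.xorSum_eq, h.mem_iff]

theorem IsMisereNimP.exists_pos {L : List ℕ} (hP : IsMisereNimP L) : ∃ c ∈ L, 0 < c := by
  by_contra! h
  have hsmall : ∀ a ∈ L, a ≤ 1 := fun a ha => (h a ha).trans zero_le_one
  have hzero : xorSum L < 2 ^ 0 := xorSum_lt_two_pow fun a ha => by simpa using h a ha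
  rw [IsMisereNimP, if_pos hsmall] at hP
  omega

theorem IsMisereNimP.not_cons {c b : ℕ} {R : List ℕ} (hP : IsMisereNimP (c :: R)) (hb : b < c) :
    ¬ IsMisereNimP (b :: R) := by
  intro hP'
  have hne : xorSum (b :: R) ≠ xorSum (c :: R) := by
    simpa only [xorSum_cons, ne_eq, Nat.xor_left_inj] using hb.ne
  unfold IsMisereNimP at hP hP'
  simp only [List.forall_mem_cons] at hP hP'
  by_cases hR : ∀ a ∈ R, a ≤ 1
  · by_cases hc : c ≤ 1
    · rw [if_pos ⟨hc, hR⟩] at hP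
      rw [if_pos ⟨by omega, hR⟩] at hP'
      exact hne (hP'.trans hP.symm)
    · rw [if_neg (by tauto), xorSum_cons] at hP
      have := two_le_xor (a := c) (by omega) (xorSum_le_one hR)
      omega
  · rw [if_neg (by tauto)] at hP hP'
    exact hne (hP'.trans hP.symm)

theorem isMisereNimP_xorSum_xor_one_cons {R : List ℕ} (hR : ∀ a ∈ R, a ≤ 1) :
    IsMisereNimP ((xorSum R ^^^ 1) :: R) := by
  have hsmall : ∀ a ∈ (xorSum R ^^^ 1) :: R, a ≤ 1 :=
    List.forall_mem_cons.2 ⟨xor_one_le_one (xorSum_le_one hR), hR⟩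
  rw [IsMisereNimP, if_pos hsmall, xorSum_cons, Nat.xor_comm, Nat.xor_xor_cancel_left]

theorem isMisereNimP_xorSum_cons {R : List ℕ} (hR : ∃ a ∈ R, 1 < a) :
    IsMisereNimP (xorSum R :: R) := by
  obtain ⟨a, ha, ha1⟩ := hR
  have hbig : ¬ ∀ a ∈ xorSum R :: R, a ≤ 1 := fun h =>
    absurd ((List.forall_mem_cons.1 h).2 a ha) (not_le.2 ha1)
  rw [IsMisereNimP, if_neg hbig, xorSum_cons, Nat.xor_self]

theorem exists_isMisereNimP_of_not {L : List ℕ} (hL : ¬ IsMisereNimP L) (hpos : ∃ c ∈ L, 0 < c) :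
    ∃ c ∈ L, ∃ b < c, IsMisereNimP (b :: L.erase c) := by
  by_cases hsmall : ∀ a ∈ L, a ≤ 1
  · obtain ⟨c, hc, hc0⟩ := hpos
    have hc1 : c = 1 := by have := hsmall c hc; omega
    have h0 : xorSum L = 0 := by
      rw [IsMisereNimP, if_pos hsmall] at hL
      have := xorSum_le_one hsmall
      omega
    refine ⟨c, hc, _, ?_,
      isMisereNimP_xorSum_xor_one_cons fun a ha => hsmall a (List.mem_of_mem_erase ha)⟩
    rw [← hc1, Nat.xor_comm, ← xorSum_eq_xor_xorSum_erase hc, h0]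
    exact hc0
  push Not at hsmall
  obtain ⟨c, hc, hc1⟩ := hsmall
  by_cases hR : ∀ a ∈ L.erase c, a ≤ 1
  · have := xor_one_le_one (xorSum_le_one hR)
    exact ⟨c, hc, _, by omega, isMisereNimP_xorSum_xor_one_cons hR⟩
  push Not at hR
  obtain ⟨e, he, he1⟩ := hR
  have hL0 : xorSum L ≠ 0 := by
    rwa [IsMisereNimP, if_neg fun h => absurd (h c hc) (by omega)] at hL
  obtain ⟨d, hd, hlt⟩ := exists_mem_xor_lt_of_lt_xorSum (Nat.pos_of_ne_zero hL0)
  rw [Nat.xor_zero, xorSum_eq_xor_xorSum_erase hd, Nat.xor_xor_cancel_left] at hlt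
  have hbig : ∃ a ∈ L.erase d, 1 < a := by
    by_cases hdc : d = c
    · exact ⟨e, hdc ▸ he, he1⟩
    · exact ⟨c, (List.mem_erase_of_ne (Ne.symm hdc)).2 hc, hc1⟩
  exact ⟨d, hd, _, hlt, isMisereNimP_xorSum_cons hbig⟩

theorem isMisereNimP_iff_nimMove (L : List ℕ) :
    IsMisereNimP L ↔ (∃ L', NimMove L' L) ∧ ∀ L', NimMove L' L → ¬ IsMisereNimP L' := by
  constructor
  · intro hP
    refine ⟨?_, fun L' hL' => ?_⟩
    · obtain ⟨c, hc, hc0⟩ := hP.exists_pos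
      obtain ⟨L', hL', -⟩ := exists_nimMove_of_mem hc hc0
      exact ⟨L', hL'⟩
    · obtain ⟨c, b, R, hb, hL, hL'⟩ := hL'.exists_perm
      rw [hL'.isMisereNimP_iff]
      exact (hL.isMisereNimP_iff.1 hP).not_cons hb
  · rintro ⟨⟨L', hL'⟩, hN⟩
    by_contra hP
    obtain ⟨c, hc, b, hb, hPb⟩ := exists_isMisereNimP_of_not hP hL'.exists_pos
    obtain ⟨L'', hL'', hperm⟩ := exists_nimMove_of_mem hc hb
    exact hN L'' hL'' (hperm.isMisereNimP_iff.2 hPb)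

theorem misereP_nimHeapSum_iff (L : List ℕ) : MisereP (nimHeapSum L) ↔ IsMisereNimP L := by
  induction hn : L.sum using Nat.strong_induction_on generalizing L with
  | _ n ih =>
  rw [misereP_iff, leftOptions_nimHeapSum, Set.image_nonempty, Set.forall_mem_image,
    isMisereNimP_iff_nimMove]
  refine and_congr Iff.rfl (forall₂_congr fun L' hL' => ?_)
  rw [ih _ (hn ▸ NimMove.sum_lt hL') L' rfl]

/-- **Misère Nim.** Let `G = *a₁ + ⋯ + *a_k`.  If some `aᵢ ≥ 2`, then `G` is a misère
P-position iff `a₁ ^^^ ⋯ ^^^ a_k = 0`.  If instead every `aᵢ` is `0` or `1`, then `G` is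
a misère P-position iff `a₁ ^^^ ⋯ ^^^ a_k = 1`. -/
theorem misere_nim (L : List ℕ) :
    ((∃ a ∈ L, 2 ≤ a) →
      (MisereP (nimHeapSum L) ↔ L.foldr (fun a r => a ^^^ r) 0 = 0)) ∧
    ((∀ a ∈ L, a = 0 ∨ a = 1) →
      (MisereP (nimHeapSum L) ↔ L.foldr (fun a r => a ^^^ r) 0 = 1)) := by
  rw [misereP_nimHeapSum_iff, IsMisereNimP]
  refine ⟨fun ⟨a, ha, h2⟩ => ?_, fun h => ?_⟩
  · rw [if_neg fun h => absurd (h a ha) (by omega)]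
    rfl
  · rw [if_pos fun a ha => by rcases h a ha with rfl | rfl <;> omega]
    rfl
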